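/- Let K, M, L ≥ 1 be integers, δt, δσ, δx > 0 with t_k = k·δt ≤ T for k ≤ K+1, and h > 0. Let N_j ≥ 0 with Σ_{j=1}^M N_j δσ ≤ ν_h (ν_h > 0), |β¹_{i,j}| ≤ B_β and |β²_{l,m}| ≤ B_β (B_β > 0). Let e₂(l,m) (1 ≤ l,m ≤ L) satisfy Σ_{l,m=1}^{L} |e₂(l,m)| (δx)² ≤ C₂·h, and let r_j^k satisfy Σ_{j=1}^{M} |r_j^k| δσ ≤ C_r·h for every k. Define e^k(i,j) (1 ≤ i ≤ k ≤ K+1, 1 ≤ j ≤ M) recursively by e^{k+1}(i,j) = e^k(i,j) for 1 ≤ i ≤ k and e^{k+1}(k+1,j) = N_j·E^{k+1} + r_j^{k+1}, where E^{k+1} = Σ_{i=1}^{k} Σ_{j'=1}^{M} β¹_{i,j'} e^{k+1}(i,j') δt δσ + Σ_{l,m=1}^{L} β²_{l,m} e₂(l,m) (δx)². Then for every 1 ≤ k ≤ K+1: Σ_{i=1}^{k} Σ_{j=1}^{M} |e^k(i,j)| δt δσ ≤ h · e^{B_β·ν_h·T} · ( C₂ + C_r/(B_β·ν_h) ). -/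

import Mathlib

/-!
The total error mass `S k = Σ_{i ≤ k} Σ_j |e^k(i,j)| δt δσ` only gains the new boundary column at
each step, and that column is controlled by the nonlocal term `E^{k+1}`, whose size is at most
`B_β (S k + C₂ h)`. Hence `S (k+1) ≤ (1 + a δt) S k + a δt c` with `a = B_β ν_h` and
`c = h (C₂ + C_r / a)`, so `S k + c` grows at most geometrically with ratio `1 + a δt ≤ e^{a δt}`,
and `S k ≤ c e^{a k δt} ≤ c e^{a T}`.
-/

open Finset Real

theorem add_le_mul_exp_of_succ_le {u : ℕ → ℝ} {q c : ℝ} {m : ℕ} (hq : 0 ≤ q)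
    (h0 : 0 ≤ u 0 + c) (hstep : ∀ n < m, u (n + 1) ≤ (1 + q) * u n + q * c) :
    ∀ n ≤ m, u n + c ≤ (u 0 + c) * exp (q * n) := by
  have hpow : ∀ n ≤ m, u n + c ≤ (1 + q) ^ n * (u 0 + c) := by
    intro n
    induction n with
    | zero => simp
    | succ n ih =>
      intro hn
      calc u (n + 1) + c ≤ (1 + q) * (u n + c) := by linarith [hstep n (by omega)]
        _ ≤ (1 + q) * ((1 + q) ^ n * (u 0 + c)) := by gcongr; exact ih (by omega)
        _ = (1 + q) ^ (n + 1) * (u 0 + c) := by ring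
  intro n hn
  calc u n + c ≤ (1 + q) ^ n * (u 0 + c) := hpow n hn
    _ ≤ exp q ^ n * (u 0 + c) := by gcongr; linarith [add_one_le_exp q]
    _ = (u 0 + c) * exp (q * n) := by rw [← exp_nat_mul, mul_comm (n : ℝ), mul_comm]

theorem abs_sum_le_mul_sum_of_abs_le {ι : Type*} {s : Finset ι} {f g : ι → ℝ} {B : ℝ}
    (h : ∀ i ∈ s, |f i| ≤ B * g i) : |∑ i ∈ s, f i| ≤ B * ∑ i ∈ s, g i :=
  (abs_sum_le_sum_abs f s).trans <| (sum_le_sum h).trans_eq (mul_sum s g B).symm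

theorem abs_sum_sum_le_mul_sum_sum_of_abs_le {ι κ : Type*} {s : Finset ι} {t : Finset κ}
    {f g : ι → κ → ℝ} {B : ℝ} (h : ∀ i ∈ s, ∀ j ∈ t, |f i j| ≤ B * g i j) :
    |∑ i ∈ s, ∑ j ∈ t, f i j| ≤ B * ∑ i ∈ s, ∑ j ∈ t, g i j :=
  abs_sum_le_mul_sum_of_abs_le fun i hi => abs_sum_le_mul_sum_of_abs_le (h i hi)

theorem abs_mul_mul_le {b x w B : ℝ} (hb : |b| ≤ B) (hw : 0 ≤ w) :
    |b * x * w| ≤ B * (|x| * w) := by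
  rw [abs_mul, abs_mul, abs_of_nonneg hw, mul_assoc]
  exact mul_le_mul_of_nonneg_right hb (by positivity)

theorem sum_abs_mul_add_mul_le {ι : Type*} {s : Finset ι} {N r w : ι → ℝ} {E ν R : ℝ}
    (hN : ∀ j ∈ s, 0 ≤ N j) (hw : ∀ j ∈ s, 0 ≤ w j) (hNsum : ∑ j ∈ s, N j * w j ≤ ν)
    (hr : ∑ j ∈ s, |r j| * w j ≤ R) :
    ∑ j ∈ s, |N j * E + r j| * w j ≤ ν * |E| + R := by
  calc ∑ j ∈ s, |N j * E + r j| * w j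
      ≤ ∑ j ∈ s, (|E| * (N j * w j) + |r j| * w j) := by
        refine sum_le_sum fun j hj => ?_
        calc |N j * E + r j| * w j ≤ (|N j * E| + |r j|) * w j :=
              mul_le_mul_of_nonneg_right (abs_add_le _ _) (hw j hj)
          _ = |E| * (N j * w j) + |r j| * w j := by rw [abs_mul, abs_of_nonneg (hN j hj)]; ring
    _ = |E| * ∑ j ∈ s, N j * w j + ∑ j ∈ s, |r j| * w j := by rw [sum_add_distrib, mul_sum]
    _ ≤ ν * |E| + R := by nlinarith [abs_nonneg E]

def errorMass (M : ℕ) (δt δσ : ℝ) (u : ℕ → ℕ → ℝ) (k : ℕ) : ℝ :=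
  ∑ i ∈ Icc 1 k, ∑ j ∈ Icc 1 M, |u i j| * δt * δσ

section errorMass

variable {M : ℕ} {δt δσ : ℝ}

theorem errorMass_zero (u : ℕ → ℕ → ℝ) : errorMass M δt δσ u 0 = 0 := by
  simp [errorMass]

theorem errorMass_succ (u : ℕ → ℕ → ℝ) (n : ℕ) :
    errorMass M δt δσ u (n + 1) =
      errorMass M δt δσ u n + δt * ∑ j ∈ Icc 1 M, |u (n + 1) j| * δσ := by
  rw [errorMass, sum_Icc_succ_top (by omega), errorMass, mul_sum]
  exact congrArg _ (sum_congr rfl fun j _ => by ring)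

theorem errorMass_congr {u v : ℕ → ℕ → ℝ} {n : ℕ}
    (huv : ∀ i, 1 ≤ i → i ≤ n → ∀ j, 1 ≤ j → j ≤ M → u i j = v i j) :
    errorMass M δt δσ u n = errorMass M δt δσ v n := by
  refine sum_congr rfl fun i hi => sum_congr rfl fun j hj => ?_
  rw [mem_Icc] at hi hj
  rw [huv i hi.1 hi.2 j hj.1 hj.2]

theorem abs_sum_sum_mul_le_mul_errorMass {β u : ℕ → ℕ → ℝ} {B : ℝ} {n : ℕ}
    (hδt : 0 ≤ δt) (hδσ : 0 ≤ δσ) (hβ : ∀ i j, 1 ≤ i → 1 ≤ j → j ≤ M → |β i j| ≤ B) :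
    |∑ i ∈ Icc 1 n, ∑ j ∈ Icc 1 M, β i j * u i j * δt * δσ| ≤ B * errorMass M δt δσ u n := by
  refine abs_sum_sum_le_mul_sum_sum_of_abs_le fun i hi j hj => ?_
  rw [mem_Icc] at hi hj
  simpa only [mul_assoc] using abs_mul_mul_le (x := u i j) (hβ i j hi.1 hj.1 hj.2)
    (mul_nonneg hδt hδσ)

theorem errorMass_succ_le {u β r : ℕ → ℕ → ℝ} {N : ℕ → ℝ} {B ν R I D : ℝ} {n : ℕ}
    (hδt : 0 ≤ δt) (hδσ : 0 ≤ δσ) (hN : ∀ j, 1 ≤ j → j ≤ M → 0 ≤ N j)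
    (hNsum : ∑ j ∈ Icc 1 M, N j * δσ ≤ ν) (hβ : ∀ i j, 1 ≤ i → 1 ≤ j → j ≤ M → |β i j| ≤ B)
    (hI : |I| ≤ B * D) (hr : ∑ j ∈ Icc 1 M, |r j (n + 1)| * δσ ≤ R)
    (hbdry : ∀ j, 1 ≤ j → j ≤ M → u (n + 1) j =
      N j * ((∑ i ∈ Icc 1 n, ∑ j' ∈ Icc 1 M, β i j' * u i j' * δt * δσ) + I) + r j (n + 1)) :
    errorMass M δt δσ u (n + 1) ≤
      (1 + B * ν * δt) * errorMass M δt δσ u n + δt * (B * ν * D + R) := by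
  set E := (∑ i ∈ Icc 1 n, ∑ j' ∈ Icc 1 M, β i j' * u i j' * δt * δσ) + I
  have hE : |E| ≤ B * errorMass M δt δσ u n + B * D :=
    (abs_add_le _ _).trans (add_le_add (abs_sum_sum_mul_le_mul_errorMass hδt hδσ hβ) hI)
  have hcolumn : ∑ j ∈ Icc 1 M, |u (n + 1) j| * δσ ≤ ν * |E| + R := by
    rw [sum_congr rfl fun j hj => by rw [hbdry j (mem_Icc.1 hj).1 (mem_Icc.1 hj).2]]
    exact sum_abs_mul_add_mul_le (fun j hj => hN j (mem_Icc.1 hj).1 (mem_Icc.1 hj).2)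
      (fun _ _ => hδσ) hNsum hr
  have hν : 0 ≤ ν := (sum_nonneg fun j hj =>
    mul_nonneg (hN j (mem_Icc.1 hj).1 (mem_Icc.1 hj).2) hδσ).trans hNsum
  calc errorMass M δt δσ u (n + 1)
      = errorMass M δt δσ u n + δt * ∑ j ∈ Icc 1 M, |u (n + 1) j| * δσ := errorMass_succ u n
    _ ≤ errorMass M δt δσ u n + δt * (ν * (B * errorMass M δt δσ u n + B * D) + R) := by
        gcongr
        exact hcolumn.trans (by gcongr)
    _ = (1 + B * ν * δt) * errorMass M δt δσ u n + δt * (B * ν * D + R) := by ring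

end errorMass

theorem stmt12_general (K M L : ℕ)
    (δt δσ δx h T : ℝ) (hδt : 0 < δt) (hδσ : 0 < δσ)
    (hT : ((K : ℝ) + 1) * δt ≤ T)
    (Bβ νh C₂ Cr : ℝ) (hBβ : 0 < Bβ) (hνh : 0 < νh)
    (N : ℕ → ℝ) (β₁ : ℕ → ℕ → ℝ) (β₂ : ℕ → ℕ → ℝ) (e₂ : ℕ → ℕ → ℝ) (r : ℕ → ℕ → ℝ)
    (hN : ∀ j, 1 ≤ j → j ≤ M → 0 ≤ N j)
    (hNsum : (∑ j ∈ Finset.Icc 1 M, N j * δσ) ≤ νh)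
    (hβ₁ : ∀ i j, 1 ≤ i → 1 ≤ j → j ≤ M → |β₁ i j| ≤ Bβ)
    (hβ₂ : ∀ l m, 1 ≤ l → l ≤ L → 1 ≤ m → m ≤ L → |β₂ l m| ≤ Bβ)
    (he₂ : (∑ l ∈ Finset.Icc 1 L, ∑ m ∈ Finset.Icc 1 L, |e₂ l m| * δx ^ 2) ≤ C₂ * h)
    (hr : ∀ k ≤ K + 1, (∑ j ∈ Finset.Icc 1 M, |r j k| * δσ) ≤ Cr * h)
    (e : ℕ → ℕ → ℕ → ℝ)
    (hrec : ∀ k ≤ K, ∀ i, 1 ≤ i → i ≤ k → ∀ j, 1 ≤ j → j ≤ M →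
      e (k + 1) i j = e k i j)
    (hbdry : ∀ k ≤ K, ∀ j, 1 ≤ j → j ≤ M →
      e (k + 1) (k + 1) j =
        N j * ((∑ i ∈ Finset.Icc 1 k, ∑ j' ∈ Finset.Icc 1 M,
                  β₁ i j' * e (k + 1) i j' * δt * δσ) +
               ∑ l ∈ Finset.Icc 1 L, ∑ m ∈ Finset.Icc 1 L,
                  β₂ l m * e₂ l m * δx ^ 2) + r j (k + 1)) :
    ∀ k, 1 ≤ k → k ≤ K + 1 →
      (∑ i ∈ Finset.Icc 1 k, ∑ j ∈ Finset.Icc 1 M, |e k i j| * δt * δσ) ≤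
        h * Real.exp (Bβ * νh * T) * (C₂ + Cr / (Bβ * νh)) := by
  intro k _ hk
  set a := Bβ * νh
  set c := C₂ * h + Cr * h / a
  have ha : 0 < a := mul_pos hBβ hνh
  have hC₂h : 0 ≤ C₂ * h := (sum_nonneg fun _ _ => sum_nonneg fun _ _ => by positivity).trans he₂
  have hCrh : 0 ≤ Cr * h := (sum_nonneg fun _ _ => by positivity).trans (hr 0 (by omega))
  have hI : |∑ l ∈ Icc 1 L, ∑ m ∈ Icc 1 L, β₂ l m * e₂ l m * δx ^ 2| ≤ Bβ * (C₂ * h) := by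
    refine (abs_sum_sum_le_mul_sum_sum_of_abs_le fun l hl m hm => ?_).trans (by gcongr)
    rw [mem_Icc] at hl hm
    exact abs_mul_mul_le (hβ₂ l m hl.1 hl.2 hm.1 hm.2) (sq_nonneg δx)
  have hstep : ∀ n < K + 1, errorMass M δt δσ (e (n + 1)) (n + 1) ≤
      (1 + a * δt) * errorMass M δt δσ (e n) n + a * δt * c := by
    intro n hn
    rw [← errorMass_congr (hrec n (by omega))]
    convert errorMass_succ_le hδt.le hδσ.le hN hNsum hβ₁ hI (hr (n + 1) (by omega))
      (hbdry n (by omega)) using 2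
    simp only [c, a]
    field_simp
  have hc : 0 ≤ c := add_nonneg hC₂h (div_nonneg hCrh ha.le)
  have hgrowth := add_le_mul_exp_of_succ_le (u := fun n => errorMass M δt δσ (e n) n)
    (mul_nonneg ha.le hδt.le) (by simpa only [errorMass_zero, zero_add] using hc) hstep k hk
  have hkT : (k : ℝ) * δt ≤ T :=
    (mul_le_mul_of_nonneg_right (by exact_mod_cast hk) hδt.le).trans hT
  calc ∑ i ∈ Icc 1 k, ∑ j ∈ Icc 1 M, |e k i j| * δt * δσ = errorMass M δt δσ (e k) k := rfl
    _ ≤ c * exp (a * δt * k) := by rw [errorMass_zero, zero_add] at hgrowth; linarith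
    _ ≤ c * exp (a * T) := mul_le_mul_of_nonneg_left
        (exp_le_exp.2 (by linarith [mul_le_mul_of_nonneg_left hkT ha.le])) hc
    _ = h * exp (a * T) * (C₂ + Cr / a) := by ring

/-- **Error propagation for the lagrangian scheme.** If the initial-data error satisfies
`Σ_{l,m} |e₂(l,m)| (δx)² ≤ C₂ h` and the truncation error satisfies `Σ_j |r_j^k| δσ ≤ C_r h`,
then the recursively defined scheme error `e^k(i,j)` satisfies, for `1 ≤ k ≤ K+1`,
`Σ_{i=1}^k Σ_{j=1}^M |e^k(i,j)| δt δσ ≤ h e^{B_β ν_h T} (C₂ + C_r/(B_β ν_h))`. -/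
theorem stmt12 (K M L : ℕ) (hK : 1 ≤ K) (hM : 1 ≤ M) (hL : 1 ≤ L)
    (δt δσ δx h T : ℝ) (hδt : 0 < δt) (hδσ : 0 < δσ) (hδx : 0 < δx) (hh : 0 < h)
    (hT : ((K : ℝ) + 1) * δt ≤ T)
    (Bβ νh C₂ Cr : ℝ) (hBβ : 0 < Bβ) (hνh : 0 < νh)
    (N : ℕ → ℝ) (β₁ : ℕ → ℕ → ℝ) (β₂ : ℕ → ℕ → ℝ) (e₂ : ℕ → ℕ → ℝ) (r : ℕ → ℕ → ℝ)
    (hN : ∀ j, 1 ≤ j → j ≤ M → 0 ≤ N j)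
    (hNsum : (∑ j ∈ Finset.Icc 1 M, N j * δσ) ≤ νh)
    (hβ₁ : ∀ i j, 1 ≤ i → 1 ≤ j → j ≤ M → |β₁ i j| ≤ Bβ)
    (hβ₂ : ∀ l m, 1 ≤ l → l ≤ L → 1 ≤ m → m ≤ L → |β₂ l m| ≤ Bβ)
    (he₂ : (∑ l ∈ Finset.Icc 1 L, ∑ m ∈ Finset.Icc 1 L, |e₂ l m| * δx ^ 2) ≤ C₂ * h)
    (hr : ∀ k ≤ K + 1, (∑ j ∈ Finset.Icc 1 M, |r j k| * δσ) ≤ Cr * h)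
    (e : ℕ → ℕ → ℕ → ℝ)
    (hrec : ∀ k ≤ K, ∀ i, 1 ≤ i → i ≤ k → ∀ j, 1 ≤ j → j ≤ M →
      e (k + 1) i j = e k i j)
    (hbdry : ∀ k ≤ K, ∀ j, 1 ≤ j → j ≤ M →
      e (k + 1) (k + 1) j =
        N j * ((∑ i ∈ Finset.Icc 1 k, ∑ j' ∈ Finset.Icc 1 M,
                  β₁ i j' * e (k + 1) i j' * δt * δσ) +
               ∑ l ∈ Finset.Icc 1 L, ∑ m ∈ Finset.Icc 1 L,
                  β₂ l m * e₂ l m * δx ^ 2) + r j (k + 1)) :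
    ∀ k, 1 ≤ k → k ≤ K + 1 →
      (∑ i ∈ Finset.Icc 1 k, ∑ j ∈ Finset.Icc 1 M, |e k i j| * δt * δσ) ≤
        h * Real.exp (Bβ * νh * T) * (C₂ + Cr / (Bβ * νh)) :=
  stmt12_general K M L δt δσ δx h T hδt hδσ hT Bβ νh C₂ Cr hBβ hνh N β₁ β₂ e₂ r hN hNsum hβ₁ hβ₂ he₂
    hr e hrec hbdry
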